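/- arXiv:1802.09169 — 3 statements merged into one kernel-verified Lean document; each statement's English description precedes it below -/
import Mathlib

section
/- Let R ⊆ ℝ^m be a connected set, let d be a positive integer, and let a_0, …, a_d : ℝ^m → ℝ be continuous functions. For each k ∈ ℝ^m let P_k(X) = Σ_{j=0}^{d} a_j(k)·X^j, viewed as a real polynomial in X. Let Q_1, …, Q_s : ℝ × ℝ^m → ℝ be continuous functions. Assume that for every k ∈ R: (i) the leading coefficient a_d(k) ≠ 0; (ii) P_k is separable (P_k has no repeated roots, equivalently P_k is coprime to its derivative); and (iii) for every real root x of P_k and every m ∈ {1,…,s}, Q_m(x,k) ≠ 0. Then the function k ↦ card { x ∈ ℝ | P_k(x) = 0 and Q_m(x,k) > 0 for all m = 1,…,s } is constant on R. -/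
open Polynomial Filter Set


-- aux 1: positive lower bound below a finite family of positives
lemma aux_pos_lb {α : Type*} (s : Finset α) (f : α → ℝ) (h : ∀ x ∈ s, 0 < f x) :
    ∃ ε > 0, ∀ x ∈ s, ε < f x := by
  classical
  induction s using Finset.induction_on with
  | empty => exact ⟨1, one_pos, by simp⟩
  | @insert a s' ha ih =>
    obtain ⟨ε, hε, hlt⟩ := ih (fun x hx => h x (Finset.mem_insert_of_mem hx))
    have hfa : 0 < f a := h a (Finset.mem_insert_self a s')
    refine ⟨min ε (f a / 2), by positivity, ?_⟩
    intro x hx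
    rcases Finset.mem_insert.1 hx with rfl | hx
    · exact (min_le_right _ _).trans_lt (by linarith)
    · exact (min_le_left _ _).trans_lt (hlt x hx)

-- aux 2: strict mono or anti from nonvanishing derivative on Icc
lemma aux_mono (p : Polynomial ℝ) (u v : ℝ) (huv : u ≤ v)
    (h : ∀ x ∈ Set.Icc u v, p.derivative.eval x ≠ 0) :
    StrictMonoOn (fun x => p.eval x) (Set.Icc u v) ∨
      StrictAntiOn (fun x => p.eval x) (Set.Icc u v) := by
  have hc : ∀ x ∈ Set.Icc u v, deriv (fun y => p.eval y) x = p.derivative.eval x :=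
    fun x _ => Polynomial.deriv _
  have hsign : (∀ x ∈ Set.Icc u v, 0 < p.derivative.eval x) ∨
      (∀ x ∈ Set.Icc u v, p.derivative.eval x < 0) := by
    by_contra hcon
    push_neg at hcon
    obtain ⟨⟨x, hx, hx0⟩, ⟨y, hy, hy0⟩⟩ := hcon
    have hx0' : p.derivative.eval x < 0 := lt_of_le_of_ne hx0 (h x hx)
    have hy0' : 0 < p.derivative.eval y := lt_of_le_of_ne hy0 (Ne.symm (h y hy))
    -- IVT gives a zero of derivative between x and y
    have hsub : Set.uIcc x y ⊆ Set.Icc u v := Set.uIcc_subset_Icc hx hy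
    have := intermediate_value_uIcc (f := fun t => p.derivative.eval t) (a := x) (b := y)
      (Polynomial.continuous _).continuousOn
    have h0 : (0:ℝ) ∈ Set.uIcc (p.derivative.eval x) (p.derivative.eval y) :=
      Set.mem_uIcc.2 (Or.inl ⟨le_of_lt hx0', le_of_lt hy0'⟩)
    obtain ⟨z, hz, hz0⟩ := this h0
    exact h z (hsub hz) hz0
  rcases hsign with hs | hs
  · left
    exact strictMonoOn_of_deriv_pos (convex_Icc u v) (Polynomial.continuous _).continuousOn
      (fun x hx => by
        have hx' : x ∈ Set.Icc u v := interior_subset hx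
        rw [hc x hx']; exact hs x hx')
  · right
    exact strictAntiOn_of_deriv_neg (convex_Icc u v) (Polynomial.continuous _).continuousOn
      (fun x hx => by
        have hx' : x ∈ Set.Icc u v := interior_subset hx
        rw [hc x hx']; exact hs x hx')


-- generic sum bound
lemma aux_sum_bound (d : ℕ) (c g : ℕ → ℝ) (η C : ℝ) (hC : 0 ≤ C)
    (hc : ∀ j ≤ d, |c j| ≤ η) (hg : ∀ j ≤ d, |g j| ≤ C) :
    |∑ j ∈ Finset.range (d + 1), c j * g j| ≤ (d + 1) * (η * C) := by
  calc |∑ j ∈ Finset.range (d + 1), c j * g j|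
      ≤ ∑ j ∈ Finset.range (d + 1), |c j * g j| := Finset.abs_sum_le_sum_abs _ _
    _ ≤ ∑ _j ∈ Finset.range (d + 1), η * C := by
        refine Finset.sum_le_sum fun j hj => ?_
        have hj' : j ≤ d := Nat.lt_succ_iff.1 (Finset.mem_range.1 hj)
        rw [abs_mul]
        exact mul_le_mul (hc j hj') (hg j hj') (abs_nonneg _)
          ((abs_nonneg (c j)).trans (hc j hj'))
    _ = (d + 1) * (η * C) := by simp [Finset.sum_const, mul_comm]

-- root bound
lemma aux_root_bound (d : ℕ) (hd : 0 < d) (c : ℕ → ℝ) (L B : ℝ) (hL : 0 < L)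
    (hlead : L ≤ |c d|) (hB : ∀ j < d, |c j| ≤ B) (x : ℝ)
    (hx : ∑ j ∈ Finset.range (d + 1), c j * x ^ j = 0) :
    |x| ≤ 1 + d * B / L := by
  have hB0 : 0 ≤ B := (abs_nonneg _).trans (hB 0 hd)
  by_contra hcon
  push_neg at hcon
  have h1 : (1:ℝ) < |x| := by
    have : (0:ℝ) ≤ d * B / L := by positivity
    linarith
  have hsplit : c d * x ^ d = -∑ j ∈ Finset.range d, c j * x ^ j := by
    have := Finset.sum_range_succ (fun j => c j * x ^ j) d
    rw [this] at hx; linarith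
  have hub : |c d| * |x| ^ d ≤ d * (B * |x| ^ (d - 1)) := by
    calc |c d| * |x| ^ d = |c d * x ^ d| := by rw [abs_mul, abs_pow]
      _ = |∑ j ∈ Finset.range d, c j * x ^ j| := by rw [hsplit, abs_neg]
      _ ≤ ∑ j ∈ Finset.range d, |c j * x ^ j| := Finset.abs_sum_le_sum_abs _ _
      _ ≤ ∑ _j ∈ Finset.range d, B * |x| ^ (d - 1) := by
          refine Finset.sum_le_sum fun j hj => ?_
          have hj' : j < d := Finset.mem_range.1 hj
          rw [abs_mul, abs_pow]
          refine mul_le_mul (hB j hj') (pow_le_pow_right₀ h1.le (Nat.le_pred_of_lt hj'))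
            (by positivity) hB0
      _ = d * (B * |x| ^ (d - 1)) := by simp [Finset.sum_const, mul_comm]
  have hxd : |x| ^ d = |x| ^ (d - 1) * |x| := by
    rw [← pow_succ, Nat.sub_add_cancel hd]
  have hpow : (0:ℝ) < |x| ^ (d - 1) := pow_pos (by linarith) _
  have : L * (|x| ^ (d - 1) * |x|) ≤ d * (B * |x| ^ (d - 1)) := by
    refine le_trans ?_ hub
    rw [hxd] at *
    have := mul_le_mul_of_nonneg_right hlead (by positivity : (0:ℝ) ≤ |x| ^ (d-1) * |x|)
    linarith
  have hLx : L * |x| ≤ d * B := by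
    have := this
    nlinarith
  have : |x| ≤ d * B / L := (le_div_iff₀ hL).2 (by linarith [hLx, mul_comm L |x|])
  linarith

section
variable (m s : ℕ) (d : ℕ)

set_option maxHeartbeats 2000000 in
lemma aux_local (hd : 0 < d)
    (a : ℕ → (Fin m → ℝ) → ℝ) (ha : ∀ j ≤ d, Continuous (a j))
    (P : (Fin m → ℝ) → Polynomial ℝ)
    (hP : ∀ k, P k = ∑ j ∈ Finset.range (d + 1), Polynomial.C (a j k) * Polynomial.X ^ j)
    (Q : Fin s → ℝ × (Fin m → ℝ) → ℝ) (hQ : ∀ i, Continuous (Q i))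
    (k₀ : Fin m → ℝ)
    (hlead₀ : a d k₀ ≠ 0) (hsep₀ : (P k₀).Separable)
    (hnz₀ : ∀ x : ℝ, (P k₀).IsRoot x → ∀ i : Fin s, Q i (x, k₀) ≠ 0) :
    ∀ᶠ k in nhds k₀,
      Set.ncard {x : ℝ | (P k).IsRoot x ∧ ∀ i : Fin s, 0 < Q i (x, k)} =
      Set.ncard {x : ℝ | (P k₀).IsRoot x ∧ ∀ i : Fin s, 0 < Q i (x, k₀)} := by
  classical
  -- evaluation formulas
  have evalP : ∀ k x, (P k).eval x = ∑ j ∈ Finset.range (d + 1), a j k * x ^ j := by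
    intro k x; rw [hP]; simp [Polynomial.eval_finset_sum]
  have evalD : ∀ k x, (P k).derivative.eval x
      = ∑ j ∈ Finset.range (d + 1), a j k * ((j : ℝ) * x ^ (j - 1)) := by
    intro k x
    rw [hP, Polynomial.derivative_sum]
    rw [Polynomial.eval_finset_sum]
    refine Finset.sum_congr rfl fun j hj => ?_
    rw [Polynomial.derivative_C_mul, Polynomial.derivative_X_pow]
    simp [mul_assoc]
  have coeffP : ∀ k, (P k).coeff d = a d k := by
    intro k; rw [hP]
    rw [Polynomial.finset_sum_coeff]
    simp only [Polynomial.coeff_C_mul, Polynomial.coeff_X_pow]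
    rw [Finset.sum_eq_single d]
    · simp
    · intro j _ hj; simp [Ne.symm hj]
    · intro h; exact absurd (Finset.self_mem_range_succ d) h
  have hp₀ : P k₀ ≠ 0 := by
    intro h; apply hlead₀; rw [← coeffP, h]; simp
  set T : Finset ℝ := (P k₀).roots.toFinset with hTdef
  have hT : ∀ x, x ∈ T ↔ (P k₀).IsRoot x := by
    intro x
    simp [hTdef, Multiset.mem_toFinset, Polynomial.mem_roots hp₀]
  -- derivative does not vanish at roots
  have hD0 : ∀ r : ℝ, (P k₀).IsRoot r → (P k₀).derivative.eval r ≠ 0 := by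
    intro r hr hder
    obtain ⟨u, v, huv⟩ := hsep₀
    have := congrArg (Polynomial.eval r) huv
    simp [Polynomial.IsRoot] at hr
    simp [hr, hder] at this
  -- pointwise continuity in k
  have hcontpt : ∀ x : ℝ, Continuous fun k => (P k).eval x := by
    intro x
    have : (fun k => (P k).eval x) = fun k => ∑ j ∈ Finset.range (d + 1), a j k * x ^ j := by
      funext k; exact evalP k x
    rw [this]
    exact continuous_finset_sum _ fun j hj =>
      ((ha j (Nat.lt_succ_iff.1 (Finset.mem_range.1 hj))).mul continuous_const)
  -- coefficient closeness eventually
  have Ecoef : ∀ η : ℝ, 0 < η → ∀ᶠ k in nhds k₀, ∀ j ≤ d, |a j k - a j k₀| ≤ η := by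
    intro η hη
    have h0 : ∀ᶠ k in nhds k₀, ∀ j ∈ Finset.range (d + 1), |a j k - a j k₀| ≤ η := by
      rw [Filter.eventually_all_finset]
      intro j hj
      have hj' : j ≤ d := Nat.lt_succ_iff.1 (Finset.mem_range.1 hj)
      have := ((ha j hj').tendsto k₀).eventually
        (Metric.closedBall_mem_nhds (a j k₀) hη)
      exact this.mono fun k hk => by
        simpa [Metric.mem_closedBall, Real.dist_eq] using hk
    exact h0.mono fun k hk j hj => hk j (Finset.mem_range.2 (Nat.lt_succ_of_le hj))
  -- difference bounds
  have hdiff : ∀ (k : Fin m → ℝ) (η M1 : ℝ), 1 ≤ M1 →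
      (∀ j ≤ d, |a j k - a j k₀| ≤ η) →
      ∀ x : ℝ, |x| ≤ M1 → |(P k).eval x - (P k₀).eval x| ≤ (d + 1) * (η * M1 ^ d) := by
    intro k η M1 hM1 hcl x hx
    rw [evalP, evalP, ← Finset.sum_sub_distrib]
    have : ∀ j ∈ Finset.range (d + 1),
        a j k * x ^ j - a j k₀ * x ^ j = (a j k - a j k₀) * x ^ j := by
      intro j _; ring
    rw [Finset.sum_congr rfl this]
    refine aux_sum_bound d _ _ η (M1 ^ d) (by positivity) hcl fun j hj => ?_
    rw [abs_pow]
    calc |x| ^ j ≤ M1 ^ j := pow_le_pow_left₀ (abs_nonneg _) hx j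
      _ ≤ M1 ^ d := pow_le_pow_right₀ hM1 hj
  have hdiffD : ∀ (k : Fin m → ℝ) (η M1 : ℝ), 1 ≤ M1 →
      (∀ j ≤ d, |a j k - a j k₀| ≤ η) →
      ∀ x : ℝ, |x| ≤ M1 →
      |(P k).derivative.eval x - (P k₀).derivative.eval x|
        ≤ (d + 1) * (η * (d * M1 ^ d)) := by
    intro k η M1 hM1 hcl x hx
    rw [evalD, evalD, ← Finset.sum_sub_distrib]
    have : ∀ j ∈ Finset.range (d + 1),
        a j k * ((j : ℝ) * x ^ (j - 1)) - a j k₀ * ((j : ℝ) * x ^ (j - 1))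
          = (a j k - a j k₀) * ((j : ℝ) * x ^ (j - 1)) := by
      intro j _; ring
    rw [Finset.sum_congr rfl this]
    refine aux_sum_bound d _ _ η (d * M1 ^ d) (by positivity) hcl fun j hj => ?_
    rw [abs_mul, abs_pow, Nat.abs_cast]
    have h1 : |x| ^ (j - 1) ≤ M1 ^ d := by
      calc |x| ^ (j - 1) ≤ M1 ^ (j - 1) := pow_le_pow_left₀ (abs_nonneg _) hx _
        _ ≤ M1 ^ d := pow_le_pow_right₀ hM1 (le_trans (Nat.sub_le j 1) hj)
    calc (j : ℝ) * |x| ^ (j - 1) ≤ (d : ℝ) * M1 ^ d := by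
          refine mul_le_mul (by exact_mod_cast hj) h1 (by positivity) (by positivity)
      _ = d * M1 ^ d := rfl
  -- per-root choice of radius and derivative lower bound
  have key : ∀ r ∈ T, ∃ ε c : ℝ, 0 < ε ∧ ε ≤ 1 ∧ 0 < c ∧
      (∀ x : ℝ, |x - r| ≤ ε → c ≤ |(P k₀).derivative.eval x|) ∧
      (∀ r' ∈ T, r' ≠ r → 2 * ε < |r - r'|) ∧
      (∀ᶠ k in nhds k₀, ∀ (i : Fin s) (x : ℝ), |x - r| ≤ ε →
        (0 < Q i (x, k) ↔ 0 < Q i (r, k₀))) := by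
    intro r hrT
    have hr' : (P k₀).IsRoot r := (hT r).1 hrT
    have hdr : (P k₀).derivative.eval r ≠ 0 := hD0 r hr'
    have habs : 0 < |(P k₀).derivative.eval r| := abs_pos.2 hdr
    set c : ℝ := |(P k₀).derivative.eval r| / 2 with hcdef
    have hc : 0 < c := by positivity
    -- (i) derivative bounded below near r
    have h1 : ∀ᶠ x in nhds r, c < |(P k₀).derivative.eval x| := by
      have hcont : ContinuousAt (fun x => |(P k₀).derivative.eval x|) r :=
        ((Polynomial.continuous _).abs).continuousAt
      exact continuousAt_const.eventually_lt hcont (by rw [hcdef]; linarith)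
    rw [Metric.eventually_nhds_iff] at h1
    obtain ⟨δ₁, hδ₁, hball₁⟩ := h1
    -- (ii) distance to other roots
    obtain ⟨ε₂, hε₂, hsep₂⟩ := aux_pos_lb (T.erase r) (fun r' => |r - r'| / 4)
      (fun r' hr'' => by
        have hne : r' ≠ r := (Finset.mem_erase.1 hr'').1
        have : r - r' ≠ 0 := sub_ne_zero.2 (Ne.symm hne)
        have := abs_pos.2 this
        positivity)
    -- (iii) sign of Q near (r, k₀)
    have h3 : ∀ᶠ q in nhds (r, k₀), ∀ i : Fin s, (0 < Q i q ↔ 0 < Q i (r, k₀)) := by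
      rw [Filter.eventually_all]
      intro i
      have hQi : Q i (r, k₀) ≠ 0 := hnz₀ r hr' i
      rcases lt_or_gt_of_ne hQi with hneg | hpos
      · have := ((hQ i).continuousAt (x := (r, k₀))).eventually_lt continuousAt_const hneg
        exact this.mono fun q hq => by constructor <;> intro h <;> linarith
      · have := continuousAt_const.eventually_lt ((hQ i).continuousAt (x := (r, k₀))) hpos
        exact this.mono fun q hq => by constructor <;> intro h <;> [exact hpos; exact hq]
    rw [nhds_prod_eq, Filter.eventually_prod_iff] at h3
    obtain ⟨pa, hpa, pb, hpb, himp⟩ := h3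
    rw [Metric.eventually_nhds_iff] at hpa
    obtain ⟨δ₃, hδ₃, hball₃⟩ := hpa
    refine ⟨min 1 (min (δ₁ / 2) (min ε₂ (δ₃ / 2))), c, by positivity, min_le_left _ _, hc,
      ?_, ?_, ?_⟩
    · intro x hx
      have : |x - r| < δ₁ := by
        have h := hx.trans ((min_le_right _ _).trans (min_le_left _ _))
        linarith
      exact (hball₁ (by rwa [Real.dist_eq])).le
    · intro r' hr'' hne
      have h := hsep₂ r' (Finset.mem_erase.2 ⟨hne, hr''⟩)
      have hm : min 1 (min (δ₁ / 2) (min ε₂ (δ₃ / 2))) ≤ ε₂ :=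
        (min_le_right _ _).trans ((min_le_right _ _).trans (min_le_left _ _))
      linarith
    · refine hpb.mono fun k hk i x hx => ?_
      have hxd : dist x r < δ₃ := by
        rw [Real.dist_eq]
        have h := hx.trans ((min_le_right _ _).trans ((min_le_right _ _).trans
          (min_le_right _ _)))
        linarith
      exact himp (hball₃ hxd) hk i
  choose! eps cc heps0 heps1 hcc0 hder hsepr hQev using key
  -- global bounds
  set L : ℝ := |a d k₀| with hLdef
  have hL : 0 < L := abs_pos.2 hlead₀
  set B : ℝ := (∑ j ∈ Finset.range d, |a j k₀|) + 1 with hBdef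
  have hBj : ∀ j < d, |a j k₀| + 1 ≤ B := by
    intro j hj
    have : |a j k₀| ≤ ∑ j ∈ Finset.range d, |a j k₀| :=
      Finset.single_le_sum (fun i _ => abs_nonneg (a i k₀)) (Finset.mem_range.2 hj)
    rw [hBdef]; linarith
  have hB0 : 0 < B := by
    have : (0:ℝ) ≤ ∑ j ∈ Finset.range d, |a j k₀| :=
      Finset.sum_nonneg fun i _ => abs_nonneg _
    rw [hBdef]; linarith
  set M : ℝ := 1 + d * B / (L / 2) with hMdef
  have hM1 : 1 ≤ M := by
    have : (0:ℝ) ≤ d * B / (L / 2) := by positivity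
    rw [hMdef]; linarith
  set M1 : ℝ := M + 1 with hM1def
  have hM11 : 1 ≤ M1 := by rw [hM1def]; linarith
  have hroot_bdd : ∀ k : Fin m → ℝ, L / 2 ≤ |a d k| → (∀ j < d, |a j k| ≤ B) →
      ∀ x : ℝ, (P k).IsRoot x → |x| ≤ M := by
    intro k hlk hbk x hx
    have hx' : ∑ j ∈ Finset.range (d + 1), a j k * x ^ j = 0 := by
      rw [← evalP]; exact hx
    have := aux_root_bound d hd (fun j => a j k) (L / 2) B (by positivity) hlk hbk x hx'
    rw [hMdef]; exact this
  have hTle : ∀ r ∈ T, |r| ≤ M := by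
    intro r hrT
    refine hroot_bdd k₀ (by rw [hLdef]; linarith) (fun j hj => by linarith [hBj j hj]) r
      ((hT r).1 hrT)
  -- the compact set away from roots
  set K : Set ℝ := Set.Icc (-M) M ∩ ⋂ r ∈ T, {x : ℝ | eps r ≤ |x - r|} with hKdef
  have hKclosed : IsClosed K := by
    refine IsClosed.inter isClosed_Icc (isClosed_biInter fun r _ => ?_)
    exact isClosed_le continuous_const ((continuous_id.sub continuous_const).abs)
  have hKcp : IsCompact K := isCompact_Icc.inter_right
    (isClosed_biInter fun r _ =>
      isClosed_le continuous_const ((continuous_id.sub continuous_const).abs))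
  have hK0 : ∀ x ∈ K, (P k₀).eval x ≠ 0 := by
    intro x hxK hx0
    have hxT : x ∈ T := (hT x).2 hx0
    have := (Set.mem_iInter₂.1 hxK.2) x hxT
    simp only [Set.mem_setOf_eq, sub_self, abs_zero] at this
    exact absurd this (not_le.2 (heps0 x hxT))
  have hδ : ∃ δ : ℝ, 0 < δ ∧ ∀ x ∈ K, δ ≤ |(P k₀).eval x| := by
    rcases K.eq_empty_or_nonempty with hKe | hne
    · exact ⟨1, one_pos, by simp [hKe]⟩
    · obtain ⟨x₀, hx₀K, hmin⟩ := hKcp.exists_isMinOn hne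
        ((Polynomial.continuous (P k₀)).abs).continuousOn
      exact ⟨|(P k₀).eval x₀|, abs_pos.2 (hK0 x₀ hx₀K), fun x hx => hmin hx⟩
  obtain ⟨δ, hδ0, hδK⟩ := hδ
  -- eventually: all roots of P k are near roots of P k₀
  have Eglob : ∀ᶠ k in nhds k₀, ∀ x : ℝ, (P k).IsRoot x → ∃ r ∈ T, |x - r| < eps r := by
    set η : ℝ := min (min 1 (L / 2)) (δ / ((d + 1) * M1 ^ d + 1)) with hηdef
    have hη : 0 < η := by
      have h1 : (0:ℝ) < (d + 1) * M1 ^ d + 1 := by positivity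
      have h2 : (0:ℝ) < δ / ((d + 1) * M1 ^ d + 1) := by positivity
      simp only [hηdef, lt_min_iff]
      exact ⟨⟨one_pos, by linarith⟩, h2⟩
    refine (Ecoef η hη).mono fun k hk x hx => ?_
    have hη1 : η ≤ 1 := (min_le_left _ _).trans (min_le_left _ _)
    have hηL : η ≤ L / 2 := (min_le_left _ _).trans (min_le_right _ _)
    have hηδ : η ≤ δ / ((d + 1) * M1 ^ d + 1) := min_le_right _ _
    have hlead' : L / 2 ≤ |a d k| := by
      have h := hk d le_rfl
      have := abs_sub_abs_le_abs_sub (a d k₀) (a d k)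
      rw [abs_sub_comm (a d k₀) (a d k)] at this
      rw [hLdef] at *
      linarith
    have hcoef' : ∀ j < d, |a j k| ≤ B := by
      intro j hj
      have h := hk j hj.le
      have := abs_sub_abs_le_abs_sub (a j k) (a j k₀)
      have := hBj j hj
      linarith
    have hxM : |x| ≤ M := hroot_bdd k hlead' hcoef' x hx
    by_contra hcon
    push_neg at hcon
    have hxK : x ∈ K := by
      refine ⟨abs_le.1 hxM |> fun h => ⟨h.1, h.2⟩, Set.mem_iInter₂.2 fun r hr => ?_⟩
      exact hcon r hr
    have hd1 := hdiff k η M1 hM11 hk x (by rw [hM1def]; linarith)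
    have hxe : (P k).eval x = 0 := hx
    rw [hxe, zero_sub, abs_neg] at hd1
    have hlt : (d + 1) * (η * M1 ^ d) < δ := by
      have hpow : (0:ℝ) < M1 ^ d := by positivity
      have h2 : (d + 1 : ℝ) * (η * M1 ^ d) ≤ ((d + 1) * M1 ^ d) * (δ / ((d + 1) * M1 ^ d + 1)) := by
        have : (d + 1 : ℝ) * (η * M1 ^ d) = ((d + 1) * M1 ^ d) * η := by ring
        rw [this]
        exact mul_le_mul_of_nonneg_left hηδ (by positivity)
      have h3 : ((d + 1 : ℝ) * M1 ^ d) * (δ / ((d + 1) * M1 ^ d + 1)) < δ := by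
        rw [div_eq_mul_inv, ← mul_assoc]
        rw [show ((d + 1 : ℝ) * M1 ^ d) * δ * ((d + 1) * M1 ^ d + 1)⁻¹
            = δ * (((d + 1) * M1 ^ d) / ((d + 1) * M1 ^ d + 1)) by ring]
        have : ((d + 1 : ℝ) * M1 ^ d) / ((d + 1) * M1 ^ d + 1) < 1 := by
          rw [div_lt_one (by positivity)]; linarith
        nlinarith
      linarith
    exact absurd (hδK x hxK) (not_le.2 (lt_of_le_of_lt hd1 hlt))
  -- eventually: derivative of P k does not vanish near each root
  have EderR : ∀ r ∈ T, ∀ᶠ k in nhds k₀, ∀ x : ℝ, |x - r| ≤ eps r →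
      (P k).derivative.eval x ≠ 0 := by
    intro r hrT
    set η : ℝ := cc r / ((d + 1) * (d * M1 ^ d) + 1) with hηdef
    have hccr := hcc0 r hrT
    have hη : 0 < η := by
      have : (0:ℝ) < (d + 1) * (d * M1 ^ d) + 1 := by positivity
      rw [hηdef]; positivity
    refine (Ecoef η hη).mono fun k hk x hx h0 => ?_
    have hxM1 : |x| ≤ M1 := by
      have h1 := hTle r hrT
      have h2 := heps1 r hrT
      have := abs_sub_abs_le_abs_sub x r
      rw [hM1def]
      linarith [abs_le.1 h1, abs_abs x]
    have hdd := hdiffD k η M1 hM11 hk x hxM1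
    rw [h0, zero_sub, abs_neg] at hdd
    have hlow := hder r hrT x hx
    have hlt : (d + 1) * (η * (d * M1 ^ d)) < cc r := by
      have hden : (0:ℝ) < (d + 1) * (d * M1 ^ d) + 1 := by positivity
      have h2 : (d + 1 : ℝ) * (η * (d * M1 ^ d)) = ((d + 1) * (d * M1 ^ d)) * η := by ring
      rw [h2, hηdef]
      rw [mul_div_assoc']
      rw [div_lt_iff₀ hden]
      nlinarith [mul_pos hccr hden]
    linarith [hdd, hlow, hlt]
  -- eventually: P k has a root near each root of P k₀
  have ErootR : ∀ r ∈ T, ∀ᶠ k in nhds k₀, ∃ x : ℝ, |x - r| ≤ eps r ∧ (P k).IsRoot x := by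
    intro r hrT
    set ε : ℝ := eps r with hεdef
    have hε0 : 0 < ε := heps0 r hrT
    set u : ℝ := r - ε with hudef
    set v : ℝ := r + ε with hvdef
    have huv : u ≤ v := by rw [hudef, hvdef]; linarith
    have hmem : ∀ x : ℝ, x ∈ Set.Icc u v ↔ |x - r| ≤ ε := by
      intro x
      rw [Set.mem_Icc, abs_sub_le_iff, hudef, hvdef]
      constructor <;> intro h <;> constructor <;> linarith [h.1, h.2]
    have hder0 : ∀ x ∈ Set.Icc u v, (P k₀).derivative.eval x ≠ 0 := by
      intro x hx
      have h1 := hder r hrT x ((hmem x).1 hx)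
      have h2 := hcc0 r hrT
      intro h0
      rw [h0, abs_zero] at h1
      linarith
    have hrmem : r ∈ Set.Icc u v := by rw [hmem]; simp [abs_nonneg]; linarith
    have humem : u ∈ Set.Icc u v := Set.left_mem_Icc.2 huv
    have hvmem : v ∈ Set.Icc u v := Set.right_mem_Icc.2 huv
    have hr0 : (P k₀).eval r = 0 := (hT r).1 hrT
    have hsigns : ((P k₀).eval u < 0 ∧ 0 < (P k₀).eval v) ∨
        (0 < (P k₀).eval u ∧ (P k₀).eval v < 0) := by
      rcases aux_mono (P k₀) u v huv hder0 with hmono | hanti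
      · left
        constructor
        · have := hmono humem hrmem (by rw [hudef]; linarith)
          simpa [hr0] using this
        · have := hmono hrmem hvmem (by rw [hvdef]; linarith)
          simpa [hr0] using this
      · right
        constructor
        · have := hanti humem hrmem (by rw [hudef]; linarith)
          simpa [hr0] using this
        · have := hanti hrmem hvmem (by rw [hvdef]; linarith)
          simpa [hr0] using this
    rcases hsigns with ⟨hu0, hv0⟩ | ⟨hu0, hv0⟩
    · have h1 : ∀ᶠ k in nhds k₀, (P k).eval u < 0 :=
        ((hcontpt u).continuousAt).eventually_lt continuousAt_const hu0
      have h2 : ∀ᶠ k in nhds k₀, 0 < (P k).eval v :=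
        continuousAt_const.eventually_lt ((hcontpt v).continuousAt) hv0
      refine (h1.and h2).mono fun k ⟨hku, hkv⟩ => ?_
      have := intermediate_value_Icc huv ((Polynomial.continuous (P k)).continuousOn)
      have h0 : (0:ℝ) ∈ Set.Icc ((P k).eval u) ((P k).eval v) := ⟨hku.le, hkv.le⟩
      obtain ⟨x, hxI, hx0⟩ := this h0
      exact ⟨x, (hmem x).1 hxI, hx0⟩
    · have h1 : ∀ᶠ k in nhds k₀, 0 < (P k).eval u :=
        continuousAt_const.eventually_lt ((hcontpt u).continuousAt) hu0
      have h2 : ∀ᶠ k in nhds k₀, (P k).eval v < 0 :=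
        ((hcontpt v).continuousAt).eventually_lt continuousAt_const hv0
      refine (h1.and h2).mono fun k ⟨hku, hkv⟩ => ?_
      have := intermediate_value_Icc' huv ((Polynomial.continuous (P k)).continuousOn)
      have h0 : (0:ℝ) ∈ Set.Icc ((P k).eval v) ((P k).eval u) := ⟨hkv.le, hku.le⟩
      obtain ⟨x, hxI, hx0⟩ := this h0
      exact ⟨x, (hmem x).1 hxI, hx0⟩
  -- combine all eventual statements
  have Eall := Eglob.and ((Filter.eventually_all_finset T).2 fun r hr =>
    (EderR r hr).and ((ErootR r hr).and (hQev r hr)))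
  refine Eall.mono fun k ⟨hg, hper⟩ => ?_
  -- uniqueness of the root of P k near each root r
  have huniq : ∀ r ∈ T, ∀ x y : ℝ,
      |x - r| ≤ eps r → (P k).IsRoot x → |y - r| ≤ eps r → (P k).IsRoot y → x = y := by
    intro r hrT x y hx hrx hy hry
    set ε : ℝ := eps r
    have hmem : ∀ z : ℝ, |z - r| ≤ ε → z ∈ Set.Icc (r - ε) (r + ε) := by
      intro z hz
      rw [Set.mem_Icc]
      have := abs_sub_le_iff.1 hz
      constructor <;> linarith [this.1, this.2]
    have hder0 : ∀ z ∈ Set.Icc (r - ε) (r + ε), (P k).derivative.eval z ≠ 0 := by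
      intro z hz
      refine (hper r hrT).1 z ?_
      rw [Set.mem_Icc] at hz
      rw [abs_sub_le_iff]
      constructor <;> linarith [hz.1, hz.2]
    have hinj : Set.InjOn (fun z => (P k).eval z) (Set.Icc (r - ε) (r + ε)) := by
      rcases aux_mono (P k) (r - ε) (r + ε) (by have := heps0 r hrT; linarith) hder0 with
        hmono | hanti
      · exact hmono.injOn
      · exact hanti.injOn
    have : (P k).eval x = (P k).eval y := by rw [hrx, hry]
    exact hinj (hmem x hx) (hmem y hy) this
  have hex : ∀ r ∈ T, ∃ x : ℝ, |x - r| ≤ eps r ∧ (P k).IsRoot x :=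
    fun r hr => (hper r hr).2.1
  choose! e he1 he2 using hex
  -- the image identity
  have himg : {x : ℝ | (P k).IsRoot x ∧ ∀ i : Fin s, 0 < Q i (x, k)}
      = e '' {x : ℝ | (P k₀).IsRoot x ∧ ∀ i : Fin s, 0 < Q i (x, k₀)} := by
    ext x
    constructor
    · rintro ⟨hroot, hQx⟩
      obtain ⟨r, hrT, hxr⟩ := hg x hroot
      have hxe : x = e r :=
        huniq r hrT x (e r) hxr.le hroot (he1 r hrT) (he2 r hrT)
      refine ⟨r, ⟨(hT r).1 hrT, fun i => ?_⟩, hxe.symm⟩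
      exact ((hper r hrT).2.2 i x hxr.le).1 (hQx i)
    · rintro ⟨r, ⟨hrroot, hrQ⟩, rfl⟩
      have hrT : r ∈ T := (hT r).2 hrroot
      refine ⟨he2 r hrT, fun i => ?_⟩
      exact ((hper r hrT).2.2 i (e r) (he1 r hrT)).2 (hrQ i)
  have hinjOn : Set.InjOn e {x : ℝ | (P k₀).IsRoot x ∧ ∀ i : Fin s, 0 < Q i (x, k₀)} := by
    intro r hr r' hr' heq
    have hrT : r ∈ T := (hT r).2 hr.1
    have hrT' : r' ∈ T := (hT r').2 hr'.1
    by_contra hne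
    have h1 := hsepr r hrT r' hrT' (Ne.symm hne)
    have h2 := hsepr r' hrT' r hrT hne
    have hb1 := he1 r hrT
    have hb2 := he1 r' hrT'
    rw [heq] at hb1
    have : |r - r'| ≤ |e r' - r'| + |e r' - r| := by
      have := abs_sub_le r (e r') r'
      rw [abs_sub_comm r (e r')] at this
      linarith [this, abs_sub_comm (e r') r']
    rw [abs_sub_comm r' r] at h2
    linarith
  rw [himg, Set.ncard_image_of_injOn hinjOn]
end
/-- Univariate core of Lemma 1: over a connected parameter region on which the
leading coefficient does not vanish, the parametric polynomial is separable, and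
no inequality polynomial `Q m` shares a zero with it, the number of distinct
real solutions of `{P = 0, Q > 0}` is constant. -/
theorem constant_card_solutions_of_regular_system
    (m s : ℕ) (R : Set (Fin m → ℝ)) (hR : IsConnected R)
    (d : ℕ) (hd : 0 < d)
    (a : ℕ → (Fin m → ℝ) → ℝ) (ha : ∀ j ≤ d, Continuous (a j))
    (P : (Fin m → ℝ) → Polynomial ℝ)
    (hP : ∀ k, P k = ∑ j ∈ Finset.range (d + 1), Polynomial.C (a j k) * Polynomial.X ^ j)
    (Q : Fin s → ℝ × (Fin m → ℝ) → ℝ) (hQ : ∀ i, Continuous (Q i))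
    (hlead : ∀ k ∈ R, a d k ≠ 0)
    (hsep : ∀ k ∈ R, (P k).Separable)
    (hnozero : ∀ k ∈ R, ∀ x : ℝ, (P k).IsRoot x → ∀ i : Fin s, Q i (x, k) ≠ 0) :
    ∀ k₁ ∈ R, ∀ k₂ ∈ R,
      Set.ncard {x : ℝ | (P k₁).IsRoot x ∧ ∀ i : Fin s, 0 < Q i (x, k₁)} =
      Set.ncard {x : ℝ | (P k₂).IsRoot x ∧ ∀ i : Fin s, 0 < Q i (x, k₂)} := by
  intro k₁ hk₁ k₂ hk₂
  set N : (Fin m → ℝ) → ℕ :=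
    fun k => Set.ncard {x : ℝ | (P k).IsRoot x ∧ ∀ i : Fin s, 0 < Q i (x, k)} with hN
  have hloc : ∀ k₀ ∈ R, ∀ᶠ k in nhds k₀, N k = N k₀ := fun k₀ hk₀ =>
    aux_local m s d hd a ha P hP Q hQ k₀ (hlead k₀ hk₀) (hsep k₀ hk₀) (hnozero k₀ hk₀)
  have hlc : IsLocallyConstant (fun z : R => N z.1) := by
    rw [IsLocallyConstant.iff_eventually_eq]
    intro z
    have h := hloc z.1 z.2
    rw [nhds_subtype_eq_comap]
    exact Filter.eventually_comap.2 (h.mono fun b hb w hw => by rw [hw]; exact hb)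
  have : (fun z : R => N z.1) ⟨k₁, hk₁⟩ = (fun z : R => N z.1) ⟨k₂, hk₂⟩ :=
    hlc.apply_eq_of_isPreconnected
      (Subtype.preconnectedSpace hR.isPreconnected).isPreconnected_univ
      (Set.mem_univ _) (Set.mem_univ _)
  exact this
end

section
/- Let R ⊆ ℝ^m be a connected set, let d be a positive integer, and let a_0, …, a_d : ℝ^m → ℝ be continuous functions. For each k ∈ ℝ^m let P_k(X) = Σ_{j=0}^{d} a_j(k)·X^j, viewed as a real polynomial in X. Assume that for every k ∈ R the leading coefficient a_d(k) ≠ 0 and P_k is separable (P_k has no repeated roots, equivalently P_k is coprime to its derivative). Then the function k ↦ card { x ∈ ℝ | P_k(x) = 0 } is constant on R. -/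
/-!
The number of real roots is locally constant in the parameter, hence constant on a connected
set. Near `k₀`, the roots of `P k` stay in a bounded region (Cauchy's bound, which varies
continuously while the leading coefficient is nonzero), and by compactness they cannot appear
away from the roots of `P k₀`. Each root `r` of `P k₀` is simple, so `P k₀'` does not vanish on a
small interval around `r`; for `k` close to `k₀` the same holds for `P k'`, making `P k` strictly
monotone there, while `P k` still changes sign across the interval. So each such interval holds
exactly one root of `P k`, and these are all of its roots.
-/

open Polynomial Set Filter Topology Metric

open scoped NNReal

theorem Set.ncard_eq_of_existsUnique_mem_inter {α β : Type*} {S : Set α} {Z : Set β}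
    {U : β → Set α} (hU : Z.PairwiseDisjoint U) (hS : S ⊆ ⋃ r ∈ Z, U r)
    (h : ∀ r ∈ Z, ∃! x, x ∈ S ∩ U r) : S.ncard = Z.ncard := by
  choose x hx huniq using h
  refine (Set.ncard_congr x (fun r hr => (hx r hr).1) ?_ ?_).symm
  · intro r s hr hs hrs
    by_contra hne
    exact (hU hr hs hne).ne_of_mem (hx r hr).2 (hrs ▸ (hx s hs).2) rfl
  · intro y hy
    obtain ⟨r, hr, hyr⟩ := mem_iUnion₂.1 (hS hy)
    exact ⟨r, hr, (huniq r hr y ⟨hy, hyr⟩).symm⟩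

theorem Set.Finite.eventually_pairwiseDisjoint_closedBall {α : Type*} [MetricSpace α]
    {Z : Set α} (hZ : Z.Finite) : ∀ᶠ δ in 𝓝 (0 : ℝ), Z.PairwiseDisjoint (closedBall · δ) := by
  refine (eventually_all_finite hZ).2 fun r _ => (eventually_all_finite hZ).2 fun s _ => ?_
  by_cases hrs : r = s
  · exact Eventually.of_forall fun _ hne => absurd hrs hne
  have hlim : Tendsto (fun δ : ℝ => δ + δ) (𝓝 0) (𝓝 0) := by
    simpa using (tendsto_id (x := 𝓝 (0 : ℝ))).add tendsto_id
  filter_upwards [hlim.eventually_lt_const (dist_pos.2 hrs)] with δ hδ _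
  exact closedBall_disjoint_closedBall hδ

namespace Polynomial

theorem injOn_eval_of_derivative_ne_zero {q : ℝ[X]} {s : Set ℝ} (hs : s.OrdConnected)
    (h : ∀ x ∈ s, q.derivative.eval x ≠ 0) : InjOn (fun x => q.eval x) s := by
  intro a ha b hb hab
  by_contra hne
  wlog hlt : a < b generalizing a b
  · exact this hb ha hab.symm (Ne.symm hne) ((not_lt.1 hlt).lt_of_ne (Ne.symm hne))
  obtain ⟨c, hc, hc0⟩ := exists_deriv_eq_zero hlt q.continuousOn hab
  exact h c (hs.out ha hb (Ioo_subset_Icc_self hc)) (Polynomial.deriv q ▸ hc0)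

theorem eval_mul_eval_neg_of_isRoot {q : ℝ[X]} {r δ : ℝ} (hδ : 0 < δ) (hr : q.IsRoot r)
    (h : ∀ x ∈ Icc (r - δ) (r + δ), q.derivative.eval x ≠ 0) :
    q.eval (r - δ) * q.eval (r + δ) < 0 := by
  have hl : r - δ ∈ Icc (r - δ) (r + δ) := ⟨le_rfl, by linarith⟩
  have hm : r ∈ Icc (r - δ) (r + δ) := ⟨by linarith, by linarith⟩
  have hu : r + δ ∈ Icc (r - δ) (r + δ) := ⟨by linarith, le_rfl⟩
  rw [IsRoot.def] at hr
  rcases q.continuousOn.strictMonoOn_of_injOn_Icc' (by linarith)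
    (injOn_eval_of_derivative_ne_zero ordConnected_Icc h) with hmono | hanti
  · exact mul_neg_of_neg_of_pos (hr ▸ hmono hl hm (by linarith)) (hr ▸ hmono hm hu (by linarith))
  · exact mul_neg_of_pos_of_neg (hr ▸ hanti hl hm (by linarith)) (hr ▸ hanti hm hu (by linarith))

theorem exists_isRoot_mem_Icc_of_eval_mul_eval_neg {q : ℝ[X]} {a b : ℝ} (hab : a ≤ b)
    (h : q.eval a * q.eval b < 0) : ∃ x ∈ Icc a b, q.IsRoot x := by
  have h0 : (0 : ℝ) ∈ uIcc (q.eval a) (q.eval b) := by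
    rcases mul_neg_iff.1 h with ⟨ha, hb⟩ | ⟨ha, hb⟩
    · exact mem_uIcc.2 (Or.inr ⟨hb.le, ha.le⟩)
    · exact mem_uIcc.2 (Or.inl ⟨ha.le, hb.le⟩)
  obtain ⟨x, hx, hx0⟩ := intermediate_value_uIcc q.continuousOn h0
  exact ⟨x, uIcc_of_le hab ▸ hx, hx0⟩

section Family

variable {X : Type*} [TopologicalSpace X] {p : X → ℝ[X]} {k₀ : X} {d : ℕ}

theorem continuousAt_eval_of_coeff (hdeg : ∀ k, (p k).natDegree ≤ d)
    (hcoeff : ∀ j, ContinuousAt (fun k => (p k).coeff j) k₀) (x : ℝ) :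
    ContinuousAt (fun z : X × ℝ => (p z.1).eval z.2) (k₀, x) := by
  simp_rw [eval_eq_sum_range' (Nat.lt_succ_of_le (hdeg _))]
  refine tendsto_finsetSum _ fun j _ => ?_
  exact (hcoeff j).fst'.mul (continuousAt_snd.pow j)

theorem continuousAt_derivative_eval_of_coeff (hdeg : ∀ k, (p k).natDegree ≤ d)
    (hcoeff : ∀ j, ContinuousAt (fun k => (p k).coeff j) k₀) (x : ℝ) :
    ContinuousAt (fun z : X × ℝ => (p z.1).derivative.eval z.2) (k₀, x) :=
  continuousAt_eval_of_coeff (p := fun k => (p k).derivative)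
    (fun k => (natDegree_derivative_le _).trans (tsub_le_self.trans (hdeg k)))
    (fun j => by simpa only [coeff_derivative] using (hcoeff (j + 1)).mul_const ((j : ℝ) + 1)) x

theorem exists_eventually_abs_lt_of_isRoot (hdeg : ∀ k, (p k).natDegree ≤ d)
    (hcoeff : ∀ j, ContinuousAt (fun k => (p k).coeff j) k₀) (hd : (p k₀).coeff d ≠ 0) :
    ∃ M, ∀ᶠ k in 𝓝 k₀, ∀ x, (p k).IsRoot x → |x| < M := by
  -- `g k` is `cauchyBound (p k)` as soon as `(p k).natDegree = d`
  set g : X → ℝ≥0 := fun k =>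
    (Finset.range d).sup (fun i => ‖(p k).coeff i‖₊) / ‖(p k).coeff d‖₊ + 1
  have hg : ContinuousAt g k₀ :=
    ((ContinuousAt.finset_sup_apply fun i _ => (hcoeff i).nnnorm).div (hcoeff d).nnnorm
      (nnnorm_ne_zero_iff.2 hd)).add continuousAt_const
  refine ⟨g k₀ + 1, ?_⟩
  filter_upwards [(hcoeff d).eventually_ne hd,
    hg.eventually_lt continuousAt_const (lt_add_one (g k₀))] with k hk hgk x hx
  have hbound := hx.norm_lt_cauchyBound fun h => hk (by simp [h])
  rw [cauchyBound, leadingCoeff, natDegree_eq_of_le_of_coeff_ne_zero (hdeg k) hk] at hbound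
  rw [← Real.norm_eq_abs, ← coe_nnnorm]
  exact_mod_cast hbound.trans hgk

theorem eventually_setOf_isRoot_subset (hdeg : ∀ k, (p k).natDegree ≤ d)
    (hcoeff : ∀ j, ContinuousAt (fun k => (p k).coeff j) k₀) (hd : (p k₀).coeff d ≠ 0)
    {U : Set ℝ} (hU : IsOpen U) (hroots : {x | (p k₀).IsRoot x} ⊆ U) :
    ∀ᶠ k in 𝓝 k₀, {x | (p k).IsRoot x} ⊆ U := by
  obtain ⟨M, hM⟩ := exists_eventually_abs_lt_of_isRoot hdeg hcoeff hd
  have hK : IsCompact (Icc (-M) M \ U) := isCompact_Icc.diff hU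
  have hne : ∀ᶠ k in 𝓝 k₀, ∀ x ∈ Icc (-M) M \ U, (p k).eval x ≠ 0 :=
    hK.eventually_forall_of_forall_eventually fun x hx =>
      (continuousAt_eval_of_coeff hdeg hcoeff x).eventually_ne fun h0 => hx.2 (hroots h0)
  filter_upwards [hM, hne] with k hkM hkne x hx
  by_contra hxU
  exact hkne x ⟨abs_le.1 (hkM x hx).le, hxU⟩ hx

theorem eventually_existsUnique_isRoot_mem_closedBall (hdeg : ∀ k, (p k).natDegree ≤ d)
    (hcoeff : ∀ j, ContinuousAt (fun k => (p k).coeff j) k₀) {r δ : ℝ} (hδ : 0 < δ)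
    (hr : (p k₀).IsRoot r) (hder : ∀ x ∈ closedBall r δ, (p k₀).derivative.eval x ≠ 0) :
    ∀ᶠ k in 𝓝 k₀, ∃! x, x ∈ {x | (p k).IsRoot x} ∩ closedBall r δ := by
  rw [Real.closedBall_eq_Icc] at hder ⊢
  have hder' : ∀ᶠ k in 𝓝 k₀, ∀ x ∈ Icc (r - δ) (r + δ), (p k).derivative.eval x ≠ 0 :=
    isCompact_Icc.eventually_forall_of_forall_eventually fun x hx =>
      (continuousAt_derivative_eval_of_coeff hdeg hcoeff x).eventually_ne (hder x hx)
  have hev : ∀ x, ContinuousAt (fun k => (p k).eval x) k₀ := fun x =>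
    (continuousAt_eval_of_coeff hdeg hcoeff x).comp (f := fun k => (k, x))
      (continuousAt_id.prodMk continuousAt_const)
  have hsign : ∀ᶠ k in 𝓝 k₀, (p k).eval (r - δ) * (p k).eval (r + δ) < 0 :=
    ((hev _).mul (hev _)).eventually_lt continuousAt_const (eval_mul_eval_neg_of_isRoot hδ hr hder)
  filter_upwards [hder', hsign] with k hk hks
  obtain ⟨x, hx, hx0⟩ := exists_isRoot_mem_Icc_of_eval_mul_eval_neg (by linarith) hks
  exact ⟨x, ⟨hx0, hx⟩, fun y hy =>
    injOn_eval_of_derivative_ne_zero ordConnected_Icc hk hy.2 hx (hy.1.trans hx0.symm)⟩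

theorem eventually_ncard_setOf_isRoot_eq (hdeg : ∀ k, (p k).natDegree ≤ d)
    (hcoeff : ∀ j, ContinuousAt (fun k => (p k).coeff j) k₀) (hd : (p k₀).coeff d ≠ 0)
    (hsep : (p k₀).Separable) :
    ∀ᶠ k in 𝓝 k₀, {x | (p k).IsRoot x}.ncard = {x | (p k₀).IsRoot x}.ncard := by
  set Z := {x | (p k₀).IsRoot x}
  have hZ : Z.Finite := finite_setOfPred_isRoot fun h => hd (by simp [h])
  have hsimple : ∀ r ∈ Z, (p k₀).derivative.eval r ≠ 0 := fun r hr =>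
    hsep.eval₂_derivative_ne_zero (RingHom.id ℝ) hr
  have hδ : ∀ᶠ δ in 𝓝 (0 : ℝ), Z.PairwiseDisjoint (closedBall · δ) ∧
      ∀ r ∈ Z, ∀ x ∈ closedBall r δ, (p k₀).derivative.eval x ≠ 0 :=
    hZ.eventually_pairwiseDisjoint_closedBall.and <| (eventually_all_finite hZ).2 fun r hr =>
      eventually_closedBall_subset ((p k₀).derivative.continuousAt.eventually_ne (hsimple r hr))
  obtain ⟨δ, ⟨hdisj, hder⟩, hδ0⟩ :=
    ((hδ.filter_mono nhdsWithin_le_nhds).and (self_mem_nhdsWithin (s := Ioi 0))).exists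
  have hsub := eventually_setOf_isRoot_subset hdeg hcoeff hd
    (isOpen_biUnion fun r _ => isOpen_ball) fun x hx => mem_biUnion hx (mem_ball_self hδ0)
  have huniq := (eventually_all_finite hZ).2 fun r hr =>
    eventually_existsUnique_isRoot_mem_closedBall hdeg hcoeff hδ0 hr (hder r hr)
  filter_upwards [hsub, huniq] with k hk hku
  exact Set.ncard_eq_of_existsUnique_mem_inter hdisj
    (hk.trans (biUnion_mono subset_rfl fun r _ => ball_subset_closedBall)) hku

end Family

end Polynomial

theorem constant_card_real_roots_general
    (m : ℕ) (R : Set (Fin m → ℝ)) (hR : IsConnected R)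
    (d : ℕ)
    (a : ℕ → (Fin m → ℝ) → ℝ) (ha : ∀ j ≤ d, Continuous (a j))
    (P : (Fin m → ℝ) → Polynomial ℝ)
    (hP : ∀ k, P k = ∑ j ∈ Finset.range (d + 1), Polynomial.C (a j k) * Polynomial.X ^ j)
    (hlead : ∀ k ∈ R, a d k ≠ 0)
    (hsep : ∀ k ∈ R, (P k).Separable) :
    ∀ k₁ ∈ R, ∀ k₂ ∈ R,
      Set.ncard {x : ℝ | (P k₁).IsRoot x} = Set.ncard {x : ℝ | (P k₂).IsRoot x} := by
  have hcoeff : ∀ j k, (P k).coeff j = if j ≤ d then a j k else 0 := fun j k => by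
    simp [hP, finsetSum_coeff]
  have hdeg : ∀ k, (P k).natDegree ≤ d := fun k => natDegree_le_iff_coeff_eq_zero.2 fun j hj => by
    simp [hcoeff, not_le.2 (by exact_mod_cast hj)]
  have hcont : ∀ j k₀, ContinuousAt (fun k => (P k).coeff j) k₀ := fun j k₀ => by
    simp only [hcoeff]
    split_ifs with hj
    exacts [(ha j hj).continuousAt, continuousAt_const]
  intro k₁ hk₁ k₂ hk₂
  refine hR.isPreconnected.constant (f := fun k => {x : ℝ | (P k).IsRoot x}.ncard)
    (fun k hk => ContinuousAt.continuousWithinAt ?_) hk₁ hk₂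
  have hlocal := eventually_ncard_setOf_isRoot_eq hdeg (hcont · k)
    (by simpa [hcoeff] using hlead k hk) (hsep k hk)
  exact (tendsto_pure.2 hlocal).mono_right (pure_le_nhds _)

/-- First ingredient of Lemma 1: over a connected parameter region on which the
leading coefficient does not vanish and the parametric polynomial is separable,
the number of distinct real roots is constant. -/
theorem constant_card_real_roots
    (m : ℕ) (R : Set (Fin m → ℝ)) (hR : IsConnected R)
    (d : ℕ) (hd : 0 < d)
    (a : ℕ → (Fin m → ℝ) → ℝ) (ha : ∀ j ≤ d, Continuous (a j))
    (P : (Fin m → ℝ) → Polynomial ℝ)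
    (hP : ∀ k, P k = ∑ j ∈ Finset.range (d + 1), Polynomial.C (a j k) * Polynomial.X ^ j)
    (hlead : ∀ k ∈ R, a d k ≠ 0)
    (hsep : ∀ k ∈ R, (P k).Separable) :
    ∀ k₁ ∈ R, ∀ k₂ ∈ R,
      Set.ncard {x : ℝ | (P k₁).IsRoot x} = Set.ncard {x : ℝ | (P k₂).IsRoot x} :=
  constant_card_real_roots_general m R hR d a ha P hP hlead hsep
end

section
/- Let N be a positive integer, let f, p : (Fin N → ℤ) → ℝ be functions, let v : Fin N → ℤ, let i, i' ∈ Fin N, and let μ_i, μ_{i'} ∈ ℝ. Assume that the functions n ↦ f(n)·p(n), n ↦ (n_i : ℝ)·f(n)·p(n), n ↦ (n_{i'} : ℝ)·f(n)·p(n), and n ↦ (n_i : ℝ)·(n_{i'} : ℝ)·f(n)·p(n) are summable over (Fin N → ℤ). Then ∑'_{n} ((n_i : ℝ) − μ_i)·((n_{i'} : ℝ) − μ_{i'})·( f(n − v)·p(n − v) − f(n)·p(n) ) = ∑'_{n} ( (v_i : ℝ)·(v_{i'} : ℝ) + (v_{i'} : ℝ)·((n_i : ℝ) − μ_i) + (v_i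 : ℝ)·((n_{i'} : ℝ) − μ_{i'}) )·f(n)·p(n), where the sums range over all n ∈ (Fin N → ℤ). -/
/-- Shift-reindexing identity for the second-central-moment equation of the
chemical master equation. -/
theorem second_moment_shift_identity
    (N : ℕ) (hN : 0 < N) (f p : (Fin N → ℤ) → ℝ) (v : Fin N → ℤ)
    (i i' : Fin N) (μi μi' : ℝ)
    (h₁ : Summable fun n : Fin N → ℤ => f n * p n)
    (h₂ : Summable fun n : Fin N → ℤ => (n i : ℝ) * (f n * p n))
    (h₃ : Summable fun n : Fin N → ℤ => (n i' : ℝ) * (f n * p n))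
    (h₄ : Summable fun n : Fin N → ℤ => (n i : ℝ) * (n i' : ℝ) * (f n * p n)) :
    ∑' n : Fin N → ℤ,
        ((n i : ℝ) - μi) * ((n i' : ℝ) - μi') * (f (n - v) * p (n - v) - f n * p n) =
      ∑' n : Fin N → ℤ,
        ((v i : ℝ) * (v i' : ℝ) + (v i' : ℝ) * ((n i : ℝ) - μi) +
            (v i : ℝ) * ((n i' : ℝ) - μi')) * (f n * p n) := by
  set g : (Fin N → ℤ) → ℝ := fun n => f n * p n with hg
  -- general summability lemma
  have key : ∀ a b : ℝ, Summable fun n : Fin N → ℤ =>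
      ((n i : ℝ) - a) * ((n i' : ℝ) - b) * g n := by
    intro a b
    have : Summable fun n : Fin N → ℤ =>
        (n i : ℝ) * (n i' : ℝ) * g n - b * ((n i : ℝ) * g n)
          - a * ((n i' : ℝ) * g n) + (a * b) * g n :=
      ((h₄.sub (h₂.mul_left b)).sub (h₃.mul_left a)).add (h₁.mul_left (a * b))
    refine this.congr fun n => ?_
    ring
  have S1 : Summable fun n : Fin N → ℤ =>
      ((n i : ℝ) - μi) * ((n i' : ℝ) - μi') * g n := key μi μi'
  have S2 : Summable fun n : Fin N → ℤ =>
      (((n + v) i : ℝ) - μi) * (((n + v) i' : ℝ) - μi') * g n := by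
    have := key (μi - v i) (μi' - v i')
    refine this.congr fun n => ?_
    simp only [Pi.add_apply, Int.cast_add]
    ring
  -- reindexing
  have e : (Fin N → ℤ) ≃ (Fin N → ℤ) := Equiv.addRight v
  have S3 : Summable fun n : Fin N → ℤ =>
      ((n i : ℝ) - μi) * ((n i' : ℝ) - μi') * g (n - v) := by
    have := S2.comp_injective (Equiv.subRight v).injective
    refine this.congr fun n => ?_
    simp [Equiv.subRight]
  have re : (∑' n : Fin N → ℤ, ((n i : ℝ) - μi) * ((n i' : ℝ) - μi') * g (n - v))
      = ∑' n : Fin N → ℤ,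
        (((n + v) i : ℝ) - μi) * (((n + v) i' : ℝ) - μi') * g n := by
    rw [← (Equiv.addRight v).tsum_eq
      (fun n => ((n i : ℝ) - μi) * ((n i' : ℝ) - μi') * g (n - v))]
    refine tsum_congr fun n => ?_
    simp [Equiv.addRight]
  calc
    ∑' n : Fin N → ℤ, ((n i : ℝ) - μi) * ((n i' : ℝ) - μi') * (g (n - v) - g n)
        = ∑' n : Fin N → ℤ, (((n i : ℝ) - μi) * ((n i' : ℝ) - μi') * g (n - v)
            - ((n i : ℝ) - μi) * ((n i' : ℝ) - μi') * g n) := by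
          refine tsum_congr fun n => ?_; ring
    _ = (∑' n : Fin N → ℤ, ((n i : ℝ) - μi) * ((n i' : ℝ) - μi') * g (n - v))
          - ∑' n : Fin N → ℤ, ((n i : ℝ) - μi) * ((n i' : ℝ) - μi') * g n :=
        Summable.tsum_sub S3 S1
    _ = (∑' n : Fin N → ℤ,
            (((n + v) i : ℝ) - μi) * (((n + v) i' : ℝ) - μi') * g n)
          - ∑' n : Fin N → ℤ, ((n i : ℝ) - μi) * ((n i' : ℝ) - μi') * g n := by
        rw [re]
    _ = ∑' n : Fin N → ℤ,
          ((((n + v) i : ℝ) - μi) * (((n + v) i' : ℝ) - μi') * g n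
            - ((n i : ℝ) - μi) * ((n i' : ℝ) - μi') * g n) := (Summable.tsum_sub S2 S1).symm
    _ = ∑' n : Fin N → ℤ,
          ((v i : ℝ) * (v i' : ℝ) + (v i' : ℝ) * ((n i : ℝ) - μi) +
              (v i : ℝ) * ((n i' : ℝ) - μi')) * g n := by
        refine tsum_congr fun n => ?_
        simp only [Pi.add_apply, Int.cast_add]
        ring
end
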